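/- arXiv:2605.23681 — 7 statements merged into one kernel-verified Lean document; each statement's English description precedes it below -/
import Mathlib

section
/- Let C and C' be F_q-subspaces of M_n(F_{q^s}) of F_q-dimension k such that C' = { X A^ρ Y : A ∈ C } for some invertible X, Y ∈ M_n(F_{q^s}) and some field automorphism ρ of F_{q^s}. Then for any F_q-basis (A_1, …, A_k) of C and any F_q-basis (B_1, …, B_k) of C', there exists an invertible matrix Q ∈ M_k(F_q) such that D(B_1, …, B_k) = { ρ(v)·Q : v ∈ D(A_1, …, A_k) }; that is, the associated vector rank-metric codes are equivalent. -/
/-- The vector rank-metric code attached to a tuple `(A 1, …, A k)` of `n × n`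
matrices over `L`: the set of vectors `(f (A 1), …, f (A k))` as `f` ranges over
all `L`-linear functionals on `Mₙ(L)`. -/
def vcode {L : Type*} [Field L] {n k : ℕ} (A : Fin k → Matrix (Fin n) (Fin n) L) :
    Set (Fin k → L) :=
  { v | ∃ f : Matrix (Fin n) (Fin n) L →ₗ[L] L, v = fun i => f (A i) }

/-!
The map `Φ : M ↦ X * M^ρ * Y` is a `ρ`-semilinear bijection of `Mₙ(L)`, so `f ↦ ρ⁻¹ ∘ f ∘ Φ` is
a bijection of the dual space and `D(Φ A₁, …, Φ A_k)` is the coordinatewise image of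
`D(A₁, …, A_k)` under `ρ`. Since `ρ` maps the subfield `K = {x | x ^ |K| = x}` of `L` onto
itself, `Φ` carries `K`-spans into `K`-spans; hence `Φ A₁, …, Φ A_k` spans `C'` and, as `C'` has
dimension `k`, is a second `K`-basis of it. A change of `K`-basis `B_j = ∑ᵢ Q i j • Φ Aᵢ` acts
on the code by `v ↦ v · Q`.
-/

open Polynomial in
theorem FiniteField.mem_range_algebraMap_iff_pow_card {K L : Type*} [Field K] [Fintype K]
    [Field L] [Algebra K L] {x : L} :
    x ∈ (algebraMap K L).range ↔ x ^ Fintype.card K = x := by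
  have hq := Fintype.one_lt_card (α := K)
  have hsplits : Splits (X ^ Fintype.card K - X : K[X]) := by
    rw [splits_iff_card_roots, FiniteField.roots_X_pow_card_sub_X,
      FiniteField.X_pow_card_sub_X_natDegree_eq K hq]
    rfl
  constructor
  · rintro ⟨a, rfl⟩
    rw [← map_pow, FiniteField.pow_card]
  · intro hx
    exact hsplits.mem_range_of_isRoot (FiniteField.X_pow_card_sub_X_ne_zero K hq) (by simp [hx])

theorem FiniteField.map_algebraMap_mem_range {K L : Type*} [Field K] [Fintype K]
    [Field L] [Algebra K L] (σ : L →+* L) (a : K) :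
    σ (algebraMap K L a) ∈ (algebraMap K L).range := by
  rw [FiniteField.mem_range_algebraMap_iff_pow_card, ← map_pow, ← map_pow, FiniteField.pow_card]

theorem Submodule.image_span_subset_span_image_of_finite {K L V W : Type*} [Field K]
    [Fintype K] [Field L] [Algebra K L] [AddCommGroup V] [Module L V] [Module K V]
    [IsScalarTower K L V] [AddCommGroup W] [Module L W] [Module K W] [IsScalarTower K L W]
    {ρ : L →+* L} (ψ : V →ₛₗ[ρ] W) (s : Set V) :
    ψ '' Submodule.span K s ⊆ Submodule.span K (ψ '' s) := by
  rintro _ ⟨x, hx, rfl⟩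
  induction hx using Submodule.span_induction with
  | mem x hx => exact Submodule.subset_span ⟨x, hx, rfl⟩
  | zero => simp
  | add x y _ _ hx hy => simpa using Submodule.add_mem _ hx hy
  | smul a x _ hx =>
    obtain ⟨b, hb⟩ := FiniteField.map_algebraMap_mem_range ρ a
    rw [← algebraMap_smul L, map_smulₛₗ, ← hb, algebraMap_smul]
    exact Submodule.smul_mem _ b hx

theorem LinearIndependent.of_span_range_eq {K V ι : Type*} [DivisionRing K] [AddCommGroup V]
    [Module K V] [Fintype ι] {v w : ι → V} (hv : LinearIndependent K v)
    (h : Submodule.span K (Set.range w) = Submodule.span K (Set.range v)) :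
    LinearIndependent K w := by
  rw [linearIndependent_iff_card_eq_finrank_span, Set.finrank, h, finrank_span_eq_card hv]

theorem exists_isUnit_matrix_of_span_range_eq {K V ι : Type*} [Field K] [AddCommGroup V]
    [Module K V] [Fintype ι] [DecidableEq ι] {v w : ι → V} (hv : LinearIndependent K v)
    (h : Submodule.span K (Set.range w) = Submodule.span K (Set.range v)) :
    ∃ Q : Matrix ι ι K, IsUnit Q ∧ ∀ j, v j = ∑ i, Q i j • w i := by
  let bv := Module.Basis.span hv
  let bw := (Module.Basis.span (hv.of_span_range_eq h)).map (LinearEquiv.ofEq _ _ h)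
  have := bw.invertibleToMatrix bv
  refine ⟨bw.toMatrix bv, isUnit_of_invertible _, fun j => ?_⟩
  have hj := congrArg Subtype.val (bw.sum_toMatrix_smul_self bv j)
  simpa [bv, bw, Module.Basis.span_apply] using hj.symm

attribute [local instance] RingHomInvPair.of_ringEquiv RingHomInvPair.of_ringEquiv_symm

section

variable {L : Type*} [Field L] {n k : ℕ}

def Matrix.mulMapMulEquiv {m : Type*} [Fintype m] [DecidableEq m] (ρ : L ≃+* L)
    (X Y : (Matrix m m L)ˣ) : Matrix m m L ≃ₛₗ[(ρ : L →+* L)] Matrix m m L where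
  toFun M := X * M.map ρ * Y
  invFun M := ((↑X⁻¹ : Matrix m m L) * M * (↑Y⁻¹ : Matrix m m L)).map ρ.symm
  map_add' M N := by simp [Matrix.map_add, mul_add, add_mul]
  map_smul' c M := by simp [Matrix.map_smul' ρ c M]
  left_inv M := by
    simp only [mul_assoc, Units.inv_mul_cancel_left, Units.mul_inv, mul_one, Matrix.map_map,
      Function.comp_def, RingEquiv.symm_apply_apply, Matrix.map_id']
  right_inv M := by
    simp only [Matrix.map_map, Function.comp_def, RingEquiv.apply_symm_apply, Matrix.map_id',
      mul_assoc, Units.mul_inv_cancel_left, Units.inv_mul, mul_one]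

theorem vcode_eq_range (A : Fin k → Matrix (Fin n) (Fin n) L) :
    vcode A = Set.range fun (f : Matrix (Fin n) (Fin n) L →ₗ[L] L) i => f (A i) := by
  ext v
  exact exists_congr fun _ => eq_comm

theorem vcode_eq_image_vecMul {K : Type*} [CommSemiring K] [Algebra K L]
    {A B : Fin k → Matrix (Fin n) (Fin n) L} (Q : Matrix (Fin k) (Fin k) K)
    (hBA : ∀ j, B j = ∑ i, Q i j • A i) :
    vcode B = (fun v => Matrix.vecMul v (Q.map (algebraMap K L))) '' vcode A := by
  rw [vcode_eq_range, vcode_eq_range, ← Set.range_comp]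
  congr 1
  ext f j
  simp only [hBA, map_sum, LinearMap.map_smul_of_tower]
  simp [Matrix.vecMul, dotProduct, Algebra.smul_def, mul_comm]

theorem vcode_map_semilinearEquiv {ρ : L ≃+* L}
    (Φ : Matrix (Fin n) (Fin n) L ≃ₛₗ[(ρ : L →+* L)] Matrix (Fin n) (Fin n) L)
    (A : Fin k → Matrix (Fin n) (Fin n) L) :
    vcode (fun i => Φ (A i)) = (fun v i => ρ (v i)) '' vcode A := by
  rw [vcode_eq_range, vcode_eq_range, ← Set.range_comp]
  apply le_antisymm
  · rintro _ ⟨f, rfl⟩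
    refine ⟨ρ.symm.toSemilinearEquiv.toLinearMap ∘ₛₗ f ∘ₛₗ Φ.toLinearMap, ?_⟩
    ext i
    exact ρ.apply_symm_apply _
  · rintro _ ⟨g, rfl⟩
    refine ⟨ρ.toSemilinearEquiv.toLinearMap ∘ₛₗ g ∘ₛₗ Φ.symm.toLinearMap, ?_⟩
    ext i
    simp

end

theorem vcode_equiv_of_spreadSet_equiv_general (n k : ℕ) (K L : Type*) [Field K] [Fintype K] [Field L]
    [Algebra K L]
    (C C' : Submodule K (Matrix (Fin n) (Fin n) L))
    (X Y : Matrix (Fin n) (Fin n) L) (hX : IsUnit X) (hY : IsUnit Y) (ρ : L ≃+* L)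
    (hC' : (C' : Set (Matrix (Fin n) (Fin n) L)) =
      (fun M => X * M.map ρ * Y) '' (C : Set (Matrix (Fin n) (Fin n) L)))
    (A B : Fin k → Matrix (Fin n) (Fin n) L)
    (hAspan : Submodule.span K (Set.range A) = C)
    (hB : LinearIndependent K B) (hBspan : Submodule.span K (Set.range B) = C') :
    ∃ Q : Matrix (Fin k) (Fin k) K, IsUnit Q ∧
      vcode B =
        (fun v => Matrix.vecMul (fun i => ρ (v i)) (Q.map (algebraMap K L))) '' vcode A := by
  let Φ := Matrix.mulMapMulEquiv ρ hX.unit hY.unit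
  have hΦC : (C' : Set _) = Φ '' C := hC'
  have hspan :
      Submodule.span K (Set.range fun i => Φ (A i)) = Submodule.span K (Set.range B) := by
    rw [hBspan]
    apply le_antisymm
    · rw [Submodule.span_le, Set.range_comp', hΦC, ← hAspan]
      exact Set.image_mono Submodule.subset_span
    · rw [← SetLike.coe_subset_coe, hΦC, ← hAspan]
      have := Submodule.image_span_subset_span_image_of_finite (K := K) Φ.toLinearMap (Set.range A)
      rwa [← Set.range_comp] at this
  obtain ⟨Q, hQ, hBQ⟩ := exists_isUnit_matrix_of_span_range_eq hB hspan
  refine ⟨Q, hQ, ?_⟩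
  rw [vcode_eq_image_vecMul Q hBQ, vcode_map_semilinearEquiv, Set.image_image]

/-- Let `C, C'` be `F_q`-subspaces of `Mₙ(F_{q^s})` of `F_q`-dimension
`k` with `C' = { X A^ρ Y : A ∈ C }` for some invertible `X, Y` and field automorphism
`ρ`.  Then for any `F_q`-bases `(A₁, …, A_k)` of `C` and `(B₁, …, B_k)` of `C'`, there
is an invertible `Q ∈ M_k(F_q)` with
`D(B₁, …, B_k) = { ρ(v)·Q : v ∈ D(A₁, …, A_k) }`; i.e. the associated vector
rank-metric codes are equivalent. -/
theorem vcode_equiv_of_spreadSet_equiv (q s n k : ℕ) (hq : IsPrimePow q) (hs : 1 ≤ s)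
    (hn : 1 ≤ n) (hk : 1 ≤ k) (K L : Type*) [Field K] [Fintype K] [Field L] [Fintype L]
    [Algebra K L] (hKcard : Fintype.card K = q) (hLcard : Fintype.card L = q ^ s)
    (C C' : Submodule K (Matrix (Fin n) (Fin n) L))
    (X Y : Matrix (Fin n) (Fin n) L) (hX : IsUnit X) (hY : IsUnit Y) (ρ : L ≃+* L)
    (hC' : (C' : Set (Matrix (Fin n) (Fin n) L)) =
      (fun M => X * M.map ρ * Y) '' (C : Set (Matrix (Fin n) (Fin n) L)))
    (A B : Fin k → Matrix (Fin n) (Fin n) L)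
    (hA : LinearIndependent K A) (hAspan : Submodule.span K (Set.range A) = C)
    (hB : LinearIndependent K B) (hBspan : Submodule.span K (Set.range B) = C') :
    ∃ Q : Matrix (Fin k) (Fin k) K, IsUnit Q ∧
      vcode B =
        (fun v => Matrix.vecMul (fun i => ρ (v i)) (Q.map (algebraMap K L))) '' vcode A :=
  vcode_equiv_of_spreadSet_equiv_general n k K L C C' X Y hX hY ρ hC' A B hAspan hB hBspan
end

section
/- Let C and C' be F_q-subspaces of M_n(F_{q^s}) with C' = { X A^ρ Y : A ∈ C } for some invertible X, Y ∈ M_n(F_{q^s}) and field automorphism ρ of F_{q^s}. Then for every m ≥ 1 there exist invertible matrices X', Y' ∈ M_{ns}(F_{q^m}) and a field automorphism ρ' of F_{q^m} such that E_m(C') = { X' M^{ρ'} Y' : M ∈ E_m(C) }. In particular, for every m ≥ 1 the multiset of ranks { rank(M) : M ∈ E_m(C) } equals the multiset of ranks { rank(M) : M ∈ E_m(C') }. -/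
/-- The regular representation `φ : F_{q^s} → M_s(F_q)` with respect to an
`F_q`-basis `b = (v₁, …, v_s)` of `F_{q^s}`: `φ(α)` is the matrix of the
`F_q`-linear map `x ↦ αx` in the basis `b`, i.e. `α·v_j = Σ_i φ(α)_{ij} v_i`. -/
noncomputable def phi {K L : Type*} [Field K] [Field L] [Algebra K L] {s : ℕ}
    (b : Module.Basis (Fin s) K L) (α : L) : Matrix (Fin s) (Fin s) K :=
  LinearMap.toMatrix b b (LinearMap.mulLeft K α)

/-- `φ̄ : Mₙ(F_{q^s}) → M_{ns}(F_q)` sends `A = (a_{ij})` to the `n × n` block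
matrix whose `(i,j)` block is `φ(a_{ij})`. -/
noncomputable def phibar {K L : Type*} [Field K] [Field L] [Algebra K L] {s n : ℕ}
    (b : Module.Basis (Fin s) K L) (A : Matrix (Fin n) (Fin n) L) :
    Matrix (Fin n × Fin s) (Fin n × Fin s) K :=
  fun p r => phi b (A p.1 r.1) p.2 r.2

/-- The `m`-th embedded space `E_m(C)`: the `F_{q^m}`-span of `{ φ̄(A) : A ∈ C }`
inside `M_{ns}(F_{q^m})`, the entries of `φ̄(A)` viewed in `F_{q^m}` via
`F_q ⊆ F_{q^m}`. -/
noncomputable def embSpace {K L M : Type*} [Field K] [Field L] [Field M] [Algebra K L]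
    [Algebra K M] {s n : ℕ} (b : Module.Basis (Fin s) K L)
    (C : Submodule K (Matrix (Fin n) (Fin n) L)) :
    Submodule M (Matrix (Fin n × Fin s) (Fin n × Fin s) M) :=
  Submodule.span M
    ((fun A => (phibar b A).map (algebraMap K M)) '' (C : Set (Matrix (Fin n) (Fin n) L)))

/-! A ring automorphism `ρ` of the finite field `L` is a power `x ↦ x ^ p ^ k` of Frobenius, so it
maps `K` into itself, acting there as `σ = Frob^k`, and the same power of Frobenius on `M` is an
automorphism `ρ'` extending `σ`. Being `σ`-semilinear, `ρ` has a matrix `R` in the basis `b` with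
`φ(ρ α) R = R φ(α)^σ`; with `D` the block-diagonal matrix `diag(R, …, R)` this gives
`φ̄(A^ρ) D = D φ̄(A)^σ`. Hence `X' = φ̄(X) D` and `Y' = D⁻¹ φ̄(Y)` carry the generators of `E_m(C)`
to those of `E_m(C')` under the `ρ'`-semilinear bijection `N ↦ X' N^{ρ'} Y'`, which preserves
rank. -/

open Matrix Module

namespace Matrix

variable {m R : Type*} [Fintype m] [DecidableEq m]

theorem rank_mul_mul_of_isUnit [CommRing R] {P Q : Matrix m m R} (hP : IsUnit P) (hQ : IsUnit Q)
    (N : Matrix m m R) : (P * N * Q).rank = N.rank := by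
  rw [mul_assoc, rank_mul_eq_right_of_isUnit_det P _ ((isUnit_iff_isUnit_det P).mp hP),
    rank_mul_eq_left_of_isUnit_det Q _ ((isUnit_iff_isUnit_det Q).mp hQ)]

theorem rank_map_ringEquiv [Field R] (φ : R ≃+* R) (N : Matrix m m R) :
    (N.map φ).rank = N.rank := by
  obtain ⟨V, U, e, hV, hU, hVNU⟩ := N.exists_rank_normal_form
  -- the normal form of `N` has entries in `{0, 1}`, which `φ` fixes
  have h : φ.mapMatrix V * φ.mapMatrix N * φ.mapMatrix U = V * N * U := by
    rw [← _root_.map_mul, ← _root_.map_mul, hVNU, RingEquiv.mapMatrix_apply, ← submatrix_map,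
      fromBlocks_map]
    simp
  rw [← RingEquiv.mapMatrix_apply, ← rank_mul_mul_of_isUnit (hV.map φ.mapMatrix)
    (hU.map φ.mapMatrix), h, rank_mul_mul_of_isUnit hV hU]

def mulMapMulₛₗ [CommSemiring R] (P Q : Matrix m m R) (φ : R ≃+* R) :
    Matrix m m R →ₛₗ[(φ : R →+* R)] Matrix m m R where
  toFun N := P * N.map φ * Q
  map_add' N N' := by simp [Matrix.map_add, mul_add, add_mul]
  map_smul' c N := by
    rw [Matrix.map_smulₛₗ _ φ c (map_mul φ c), mul_smul_comm, smul_mul_assoc]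
    rfl

theorem mulMapMulₛₗ_injective [CommSemiring R] {P Q : Matrix m m R} (hP : IsUnit P) (hQ : IsUnit Q)
    (φ : R ≃+* R) : Function.Injective (mulMapMulₛₗ P Q φ) := fun _ _ h =>
  map_injective φ.injective (hP.mul_right_injective (hQ.mul_left_injective h))

theorem rank_mulMapMulₛₗ [Field R] {P Q : Matrix m m R} (hP : IsUnit P) (hQ : IsUnit Q)
    (φ : R ≃+* R) (N : Matrix m m R) : (mulMapMulₛₗ P Q φ N).rank = N.rank :=
  (rank_mul_mul_of_isUnit hP hQ _).trans (rank_map_ringEquiv φ N)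

end Matrix

theorem Set.ncard_sep_image {α β γ : Type*} {f : α → β} (hf : Function.Injective f) {g : α → γ}
    {g' : β → γ} (hg : ∀ x, g' (f x) = g x) (S : Set α) (r : γ) :
    {y ∈ f '' S | g' y = r}.ncard = {x ∈ S | g x = r}.ncard := by
  have h : {y ∈ f '' S | g' y = r} = f '' {x ∈ S | g x = r} := by
    ext y
    constructor
    · rintro ⟨⟨x, hx, rfl⟩, hr⟩
      exact ⟨x, ⟨hx, hg x ▸ hr⟩, rfl⟩
    · rintro ⟨x, ⟨hx, hr⟩, rfl⟩
      exact ⟨⟨x, hx, rfl⟩, (hg x).trans hr⟩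
  rw [h, ncard_image_of_injective _ hf]

theorem FiniteField.exists_coe_eq_iterateFrobenius {L : Type*} [Field L] [Finite L] (p : ℕ)
    [Fact p.Prime] [CharP L p] (ρ : L ≃+* L) : ∃ k, ⇑ρ = iterateFrobenius L p k := by
  let := ZMod.algebra L p
  have := Fintype.ofFinite L
  obtain ⟨k, hk⟩ := (bijective_frobeniusAlgEquivOfAlgebraic_pow (ZMod p) L).2
    (AlgEquiv.ofRingEquiv (f := ρ) fun x =>
      RingHom.congr_fun (RingHom.ext_zmod ((ρ : L →+* L).comp (algebraMap (ZMod p) L)) _) x)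
  refine ⟨k, funext fun x => ?_⟩
  have := DFunLike.congr_fun hk x
  rw [AlgEquiv.coe_pow, coe_frobeniusAlgEquivOfAlgebraic_iterate, ZMod.card] at this
  exact this.symm

theorem Module.Basis.repr_semilinearMap_apply {R S M M' ι ι' : Type*} [CommSemiring R]
    [CommSemiring S] [AddCommMonoid M] [AddCommMonoid M'] [Module R M] [Module S M'] [Fintype ι]
    {σ : R →+* S} (b : Basis ι R M) (b' : Basis ι' S M') (f : M →ₛₗ[σ] M') (x : M) :
    ⇑(b'.repr (f x)) = b'.toMatrix (f ∘ b) *ᵥ (σ ∘ b.repr x) := by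
  have hx : f x = ∑ j, σ (b.repr x j) • f (b j) := by
    conv_lhs => rw [← b.sum_repr x]
    rw [map_sum]
    simp only [LinearMap.map_smulₛₗ]
  ext i
  simp [hx, mulVec, dotProduct, Basis.toMatrix_apply, mul_comm]

section SemilinearMatrix

variable {K L ι : Type*} [Field K] [Field L] [Algebra K L] [Fintype ι] (b : Basis ι K L)
  {σ : K →+* K} {ρ : L ≃+* L} (hσ : ∀ c, ρ (algebraMap K L c) = algebraMap K L (σ c))
include hσ

theorem repr_ringEquiv_apply (x : L) :
    ⇑(b.repr (ρ x)) = b.toMatrix (ρ ∘ b) *ᵥ (σ ∘ b.repr x) :=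
  b.repr_semilinearMap_apply b
    { toFun := ρ, map_add' := map_add ρ, map_smul' := fun c x => by simp [Algebra.smul_def, hσ] } x

theorem leftMulMatrix_map_mul_toMatrix [DecidableEq ι] (α : L) :
    Algebra.leftMulMatrix b (ρ α) * b.toMatrix (ρ ∘ b) =
      b.toMatrix (ρ ∘ b) * (Algebra.leftMulMatrix b α).map σ := by
  ext i j
  have h := congrFun (repr_ringEquiv_apply b hσ (α * b j)) i
  rw [map_mul, ← Algebra.leftMulMatrix_mulVec_repr] at h
  simpa [mul_apply, mulVec, dotProduct, Basis.toMatrix_apply,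
    Algebra.leftMulMatrix_eq_repr_mul] using h

theorem toMatrix_mul_map_toMatrix_symm [DecidableEq ι] :
    b.toMatrix (ρ ∘ b) * (b.toMatrix (ρ.symm ∘ b)).map σ = 1 := by
  ext i j
  have h := congrFun (repr_ringEquiv_apply b hσ (ρ.symm (b j))) i
  rw [RingEquiv.apply_symm_apply, b.repr_self] at h
  simpa [mul_apply, mulVec, dotProduct, Basis.toMatrix_apply, one_apply,
    Finsupp.single_apply, eq_comm] using h.symm

end SemilinearMatrix

section Phibar

variable {K L : Type*} [Field K] [Field L] [Algebra K L] {s n : ℕ} (b : Basis (Fin s) K L)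

theorem phibar_eq_compRingEquiv (A : Matrix (Fin n) (Fin n) L) :
    phibar b A = compRingEquiv (Fin n) (Fin s) K (A.map (Algebra.leftMulMatrix b)) :=
  rfl

theorem phibar_map_mul_scalar {ρ : L ≃+* L} {σ : K →+* K} {R : Matrix (Fin s) (Fin s) K}
    (hR : ∀ α, Algebra.leftMulMatrix b (ρ α) * R = R * (Algebra.leftMulMatrix b α).map σ)
    (A : Matrix (Fin n) (Fin n) L) :
    phibar b (A.map ρ) * compRingEquiv (Fin n) (Fin s) K (scalar (Fin n) R) =
      compRingEquiv (Fin n) (Fin s) K (scalar (Fin n) R) * (phibar b A).map σ := by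
  rw [phibar_eq_compRingEquiv, phibar_eq_compRingEquiv, ← map_mul]
  change _ = _ *
    compRingEquiv (Fin n) (Fin s) K ((A.map (Algebra.leftMulMatrix b)).map (·.map σ))
  rw [← map_mul]
  congr 1
  ext i j : 2
  simp [scalar_apply, mul_diagonal, diagonal_mul, hR]

theorem exists_phibar_map_eq_mul_map_mul {M : Type*} [Field M] [Algebra K M] {ρ : L ≃+* L}
    {σ : K →+* K} {ρ' : M ≃+* M} (hσ : ∀ c, ρ (algebraMap K L c) = algebraMap K L (σ c))
    (hρ' : ∀ c, ρ' (algebraMap K M c) = algebraMap K M (σ c))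
    {X Y : Matrix (Fin n) (Fin n) L} (hX : IsUnit X) (hY : IsUnit Y) :
    ∃ X' Y' : Matrix (Fin n × Fin s) (Fin n × Fin s) M, IsUnit X' ∧ IsUnit Y' ∧
      ∀ A, (phibar b (X * A.map ρ * Y)).map (algebraMap K M) =
        X' * ((phibar b A).map (algebraMap K M)).map ρ' * Y' := by
  let E : Matrix (Fin n) (Fin n) L →+* Matrix (Fin n × Fin s) (Fin n × Fin s) M :=
    (algebraMap K M).mapMatrix.comp ((compRingEquiv (Fin n) (Fin s) K : _ →+* _).comp
      (Algebra.leftMulMatrix b).toRingHom.mapMatrix)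
  have hE : ∀ A, (phibar b A).map (algebraMap K M) = E A := fun _ => rfl
  let B : Matrix (Fin s) (Fin s) K →+* Matrix (Fin n × Fin s) (Fin n × Fin s) M :=
    (algebraMap K M).mapMatrix.comp ((compRingEquiv (Fin n) (Fin s) K : _ →+* _).comp
      (scalar (Fin n)))
  set D := B (b.toMatrix (ρ ∘ b))
  set D' := B ((b.toMatrix (ρ.symm ∘ b)).map σ)
  have hDD' : D * D' = 1 := by
    rw [← map_mul, toMatrix_mul_map_toMatrix_symm b hσ, map_one]
  have hconj : ∀ A, E (A.map ρ) * D = D * (E A).map ρ' := fun A => by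
    have h := congrArg (Matrix.map · (algebraMap K M))
      (phibar_map_mul_scalar b (leftMulMatrix_map_mul_toMatrix b hσ) A)
    have hcomp : ⇑(algebraMap K M) ∘ σ = ρ' ∘ algebraMap K M :=
      funext fun c => (hρ' c).symm
    rw [Matrix.map_mul, Matrix.map_mul, Matrix.map_map, hcomp, ← Matrix.map_map] at h
    exact h
  refine ⟨E X * D, D' * E Y,
    (hX.map E).mul ((isUnit_iff_isUnit_det D).2 (isUnit_det_of_right_inverse hDD')),
    ((isUnit_iff_isUnit_det D').2 (isUnit_det_of_left_inverse hDD')).mul (hY.map E),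
    fun A => ?_⟩
  calc (phibar b (X * A.map ρ * Y)).map (algebraMap K M)
      = E X * (E (A.map ρ) * D * D') * E Y := by
        rw [hE, mul_assoc _ D, hDD', mul_one, map_mul, map_mul]
    _ = E X * D * ((phibar b A).map (algebraMap K M)).map ρ' * (D' * E Y) := by
        rw [hconj, hE]
        simp only [mul_assoc]

end Phibar

theorem embSpace_equiv_of_equiv_general (s n : ℕ) (K L M : Type*) [Field K] [Field L] [Fintype L]
    [Field M] [Fintype M] [Algebra K L] [Algebra K M]
    (b : Module.Basis (Fin s) K L)
    (C C' : Submodule K (Matrix (Fin n) (Fin n) L))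
    (X Y : Matrix (Fin n) (Fin n) L) (hX : IsUnit X) (hY : IsUnit Y) (ρ : L ≃+* L)
    (hC' : (C' : Set (Matrix (Fin n) (Fin n) L)) =
      (fun A => X * A.map ρ * Y) '' (C : Set (Matrix (Fin n) (Fin n) L))) :
    (∃ (X' Y' : Matrix (Fin n × Fin s) (Fin n × Fin s) M) (ρ' : M ≃+* M),
        IsUnit X' ∧ IsUnit Y' ∧
        ((embSpace (M := M) b C' : Set (Matrix (Fin n × Fin s) (Fin n × Fin s) M)) =
          (fun N => X' * N.map ρ' * Y') ''
            (embSpace (M := M) b C : Set (Matrix (Fin n × Fin s) (Fin n × Fin s) M)))) ∧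
      ∀ r : ℕ,
        {N ∈ (embSpace (M := M) b C : Set (Matrix (Fin n × Fin s) (Fin n × Fin s) M)) |
            N.rank = r}.ncard =
        {N ∈ (embSpace (M := M) b C' : Set (Matrix (Fin n × Fin s) (Fin n × Fin s) M)) |
            N.rank = r}.ncard := by
  obtain ⟨p, _⟩ := CharP.exists L
  have : Fact p.Prime := ⟨CharP.char_is_prime L p⟩
  have : CharP K p := (Algebra.charP_iff K L p).2 ‹_›
  have : CharP M p := (Algebra.charP_iff K M p).1 ‹_›
  obtain ⟨k, hk⟩ := FiniteField.exists_coe_eq_iterateFrobenius p ρ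
  obtain ⟨X', Y', hX', hY', hXY⟩ := exists_phibar_map_eq_mul_map_mul b
    (σ := iterateFrobenius K p k) (ρ' := iterateFrobeniusEquiv M p k)
    (fun c => hk ▸ (algebraMap K L).map_iterateFrobenius p c k |>.symm)
    (fun c => ((algebraMap K M).map_iterateFrobenius p c k).symm) hX hY
  set τ := mulMapMulₛₗ X' Y' (iterateFrobeniusEquiv M p k)
  have himage : (embSpace (M := M) b C' : Set _) = τ '' embSpace (M := M) b C := by
    rw [← Submodule.map_coe, embSpace, embSpace, Submodule.map_span, hC', Set.image_image,
      Set.image_image, Set.image_congr fun A _ => hXY A]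
    rfl
  refine ⟨⟨X', Y', _, hX', hY', himage⟩, fun r => ?_⟩
  rw [himage,
    Set.ncard_sep_image (mulMapMulₛₗ_injective hX' hY' _) (rank_mulMapMulₛₗ hX' hY' _)]

/-- If `C' = { X A^ρ Y : A ∈ C }` for invertible `X, Y ∈ Mₙ(F_{q^s})`
and a field automorphism `ρ` of `F_{q^s}`, then for every `m ≥ 1` there exist
invertible `X', Y' ∈ M_{ns}(F_{q^m})` and a field automorphism `ρ'` of `F_{q^m}` with
`E_m(C') = { X' M^{ρ'} Y' : M ∈ E_m(C) }`; in particular `E_m(C)` and `E_m(C')` have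
the same rank distribution. -/
theorem embSpace_equiv_of_equiv (q s n m : ℕ) (hq : IsPrimePow q) (hs : 1 ≤ s)
    (hn : 1 ≤ n) (hm : 1 ≤ m) (K L M : Type*) [Field K] [Fintype K] [Field L] [Fintype L]
    [Field M] [Fintype M] [Algebra K L] [Algebra K M] (hKcard : Fintype.card K = q)
    (hLcard : Fintype.card L = q ^ s) (hMcard : Fintype.card M = q ^ m)
    (b : Module.Basis (Fin s) K L)
    (C C' : Submodule K (Matrix (Fin n) (Fin n) L))
    (X Y : Matrix (Fin n) (Fin n) L) (hX : IsUnit X) (hY : IsUnit Y) (ρ : L ≃+* L)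
    (hC' : (C' : Set (Matrix (Fin n) (Fin n) L)) =
      (fun A => X * A.map ρ * Y) '' (C : Set (Matrix (Fin n) (Fin n) L))) :
    (∃ (X' Y' : Matrix (Fin n × Fin s) (Fin n × Fin s) M) (ρ' : M ≃+* M),
        IsUnit X' ∧ IsUnit Y' ∧
        ((embSpace (M := M) b C' : Set (Matrix (Fin n × Fin s) (Fin n × Fin s) M)) =
          (fun N => X' * N.map ρ' * Y') ''
            (embSpace (M := M) b C : Set (Matrix (Fin n × Fin s) (Fin n × Fin s) M)))) ∧
      ∀ r : ℕ,
        {N ∈ (embSpace (M := M) b C : Set (Matrix (Fin n × Fin s) (Fin n × Fin s) M)) |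
            N.rank = r}.ncard =
        {N ∈ (embSpace (M := M) b C' : Set (Matrix (Fin n × Fin s) (Fin n × Fin s) M)) |
            N.rank = r}.ncard :=
  embSpace_equiv_of_equiv_general s n K L M b C C' X Y hX hY ρ hC'
end

section
/- Let C and C' be F_q-subspaces of M_n(F_{q^s}). If there exists some m ≥ 1 for which the multiset of ranks { rank(M) : M ∈ E_m(C) } differs from the multiset { rank(M) : M ∈ E_m(C') }, then there exist no invertible X, Y ∈ M_n(F_{q^s}) and field automorphism ρ of F_{q^s} with C' = { X A^ρ Y : A ∈ C }; that is, C and C' are inequivalent as matrix rank-metric codes. -/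
/-!
The map `A ↦ X A^ρ Y` transports to the embedded spaces. The automorphism `ρ` of `F_{q^s}`
restricts to an automorphism `σ` of `F_q`, and under the regular representation `ρ` becomes `σ`
followed by conjugation by the matrix `P` of `ρ` in the basis `b`. Hence
`φ̄(X A^ρ Y) = φ̄(X) D φ̄(A)^σ D⁻¹ φ̄(Y)` with `D = diag(P, …, P)`. Lifting `σ` to an
automorphism `τ` of `F_{q^m}`, the map `N ↦ U N^τ V` with `U = φ̄(X) D`, `V = D⁻¹ φ̄(Y)` is a
`τ`-semilinear bijection carrying `E_m(C)` onto `E_m(C')` and preserving rank, so the two rank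
distributions coincide.
-/

open Matrix

section FiniteFieldAutomorphisms

variable {K L : Type*} [Field K] [Field L] [Algebra K L]

theorem exists_ringEquiv_restrict [Finite K] (ρ : L ≃+* L) :
    ∃ σ : K ≃+* K, ∀ c, algebraMap K L (σ c) = ρ (algebraMap K L c) := by
  obtain ⟨p, _⟩ := CharP.exists K
  have : Fact p.Prime := ⟨CharP.char_is_prime K p⟩
  have : CharP L p := charP_of_injective_algebraMap (algebraMap K L).injective p
  let _ := ZMod.algebra K p
  let _ := ZMod.algebra L p
  have : IsScalarTower (ZMod p) K L := .of_algebraMap_eq' (RingHom.ext_zmod _ _)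
  -- `K` is normal over `ZMod p`, so every automorphism of `L` restricts to `K`.
  let ρ' : L ≃ₐ[ZMod p] L :=
    AlgEquiv.ofRingEquiv (f := ρ) (RingHom.congr_fun (RingHom.ext_zmod (ρ.toRingHom.comp _) _))
  exact ⟨(ρ'.restrictNormal K).toRingEquiv, ρ'.restrictNormal_commutes K⟩

theorem exists_ringEquiv_lift [Finite L] (σ : K ≃+* K) :
    ∃ τ : L ≃+* L, ∀ c, τ (algebraMap K L c) = algebraMap K L (σ c) := by
  obtain ⟨p, _⟩ := CharP.exists L
  have : Fact p.Prime := ⟨CharP.char_is_prime L p⟩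
  have : CharP K p := (algebraMap K L).charP (algebraMap K L).injective p
  let _ := ZMod.algebra K p
  let _ := ZMod.algebra L p
  have : IsScalarTower (ZMod p) K L := .of_algebraMap_eq' (RingHom.ext_zmod _ _)
  -- `L` is normal over `ZMod p`, so every automorphism of `K` lifts to `L`.
  let σ' : K ≃ₐ[ZMod p] K :=
    AlgEquiv.ofRingEquiv (f := σ) (RingHom.congr_fun (RingHom.ext_zmod (σ.toRingHom.comp _) _))
  exact ⟨(σ'.liftNormal L).toRingEquiv, σ'.liftNormal_commutes L⟩

end FiniteFieldAutomorphisms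

theorem Matrix.rank_map_ringEquiv_s6 {F m n : Type*} [Field F] [Fintype n] (A : Matrix m n F)
    (τ : F ≃+* F) : (A.map τ).rank = A.rank := by
  have := RingHomInvPair.of_ringEquiv τ
  have := RingHomInvPair.of_ringEquiv_symm τ
  let e : (m → F) ≃ₛₗ[(τ : F →+* F)] (m → F) :=
    { toFun v := τ ∘ v
      invFun v := τ.symm ∘ v
      map_add' _ _ := funext fun _ => map_add τ _ _
      map_smul' _ _ := funext fun _ => map_mul τ _ _
      left_inv _ := funext fun _ => τ.symm_apply_apply _
      right_inv _ := funext fun _ => τ.apply_symm_apply _ }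
  have hrange : LinearMap.range (A.map τ).mulVecLin =
      (LinearMap.range A.mulVecLin).map (e : (m → F) →ₛₗ[(τ : F →+* F)] (m → F)) := by
    have he : ∀ w, e (A *ᵥ w) = A.map τ *ᵥ (τ ∘ w) := fun w =>
      funext (RingHom.map_mulVec (τ : F →+* F) A w)
    ext x
    simp only [LinearMap.mem_range, Submodule.mem_map,
      Matrix.mulVecLin_apply, LinearEquiv.coe_coe]
    constructor
    · rintro ⟨v, rfl⟩
      refine ⟨_, ⟨τ.symm ∘ v, rfl⟩, ?_⟩
      rw [he]
      exact congrArg _ (funext fun i => τ.apply_symm_apply (v i))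
    · rintro ⟨_, ⟨w, rfl⟩, rfl⟩
      exact ⟨τ ∘ w, (he w).symm⟩
  rw [Matrix.rank, Matrix.rank, hrange]
  exact (congrArg Cardinal.toNat (rank_eq_of_equiv_equiv τ (e.submoduleMap _).toAddEquiv
    τ.bijective (e.submoduleMap _).map_smulₛₗ)).symm

section SemilinearEquivalence

variable {F : Type*} [Field F] {m n : Type*} [Fintype m] [Fintype n]

def Matrix.mulMapMul (τ : F ≃+* F) (U : Matrix m m F) (V : Matrix n n F) :
    Matrix m n F →ₛₗ[(τ : F →+* F)] Matrix m n F where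
  toFun N := U * N.map τ * V
  map_add' N N' := by rw [Matrix.map_add _ (map_add τ), Matrix.mul_add, Matrix.add_mul]
  map_smul' c N := by
    have hmap : (c • N).map τ = τ c • N.map τ := by
      ext
      simp
    rw [hmap, Matrix.mul_smul, Matrix.smul_mul]
    rfl

variable [DecidableEq m] [DecidableEq n] {τ : F ≃+* F} {U : Matrix m m F} {V : Matrix n n F}

theorem Matrix.rank_mulMapMul (hU : IsUnit U.det) (hV : IsUnit V.det) (N : Matrix m n F) :
    (mulMapMul τ U V N).rank = N.rank := by
  rw [mulMapMul, LinearMap.coe_mk, AddHom.coe_mk, rank_mul_eq_left_of_isUnit_det _ _ hV,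
    rank_mul_eq_right_of_isUnit_det _ _ hU, rank_map_ringEquiv_s6]

theorem Matrix.mulMapMul_injective (hU : IsUnit U.det) (hV : IsUnit V.det) :
    Function.Injective (mulMapMul τ U V) := by
  intro N N' h
  have hmap : N.map τ = N'.map τ := by
    simpa [mulMapMul, Matrix.mul_assoc, nonsing_inv_mul_cancel_left _ _ hU,
      mul_nonsing_inv_cancel_right _ _ hV] using congrArg (fun Z => U⁻¹ * Z * V⁻¹) h
  exact map_injective τ.injective hmap

theorem Matrix.ncard_setOf_rank_image_mulMapMul (hU : IsUnit U.det) (hV : IsUnit V.det)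
    (S : Set (Matrix m n F)) (r : ℕ) :
    {N ∈ mulMapMul τ U V '' S | N.rank = r}.ncard = {N ∈ S | N.rank = r}.ncard := by
  have hpre : mulMapMul τ U V ⁻¹' {N | N.rank = r} = {N | N.rank = r} := by
    ext N
    simp [rank_mulMapMul hU hV]
  calc {N ∈ mulMapMul τ U V '' S | N.rank = r}.ncard
      = (mulMapMul τ U V '' (S ∩ mulMapMul τ U V ⁻¹' {N | N.rank = r})).ncard := by
        rw [Set.image_inter_preimage]
        rfl
    _ = {N ∈ S | N.rank = r}.ncard := by
        rw [Set.ncard_image_of_injective _ (mulMapMul_injective hU hV), hpre]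
        rfl

end SemilinearEquivalence

section SemilinearConjugation

variable {K L : Type*} [Field K] [Field L] [Algebra K L] {ι : Type*} [Fintype ι]
  (b : Module.Basis ι K L) {ρ : L ≃+* L} {σ : K ≃+* K}

theorem Module.Basis.repr_ringEquiv_apply
    (hσ : ∀ c, algebraMap K L (σ c) = ρ (algebraMap K L c)) (y : L) (i : ι) :
    b.repr (ρ y) i = ∑ k, b.toMatrix (ρ ∘ b) i k * σ (b.repr y k) := by
  have hsmul : ∀ (c : K) (x : L), ρ (c • x) = σ c • ρ x := fun c x => by
    rw [Algebra.smul_def, Algebra.smul_def, map_mul, hσ]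
  conv_lhs => rw [← b.sum_repr y]
  simp only [map_sum, hsmul, map_smul, Finsupp.coe_finsetSum, Finsupp.coe_smul,
    Finset.sum_apply, Pi.smul_apply, smul_eq_mul, b.toMatrix_apply, Function.comp_apply, mul_comm]

theorem Module.Basis.toMatrix_ringEquiv_comp_mul
    (hσ : ∀ c, algebraMap K L (σ c) = ρ (algebraMap K L c)) (v : ι → L) :
    b.toMatrix (ρ ∘ b) * (b.toMatrix v).map σ = b.toMatrix (ρ ∘ v) := by
  ext i j
  rw [mul_apply, b.toMatrix_apply (ρ ∘ v), Function.comp_apply, b.repr_ringEquiv_apply hσ]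
  rfl

theorem Module.Basis.isUnit_det_toMatrix_ringEquiv_comp [DecidableEq ι]
    (hσ : ∀ c, algebraMap K L (σ c) = ρ (algebraMap K L c)) :
    IsUnit (b.toMatrix (ρ ∘ b)).det := by
  refine isUnit_det_of_right_inverse (B := (b.toMatrix (ρ.symm ∘ b)).map σ) ?_
  rw [b.toMatrix_ringEquiv_comp_mul hσ]
  convert b.toMatrix_self
  exact funext fun j => ρ.apply_symm_apply (b j)

end SemilinearConjugation

section RegularRepresentation

variable {K L : Type*} [Field K] [Field L] [Algebra K L] {s : ℕ} (b : Module.Basis (Fin s) K L)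

theorem phi_eq_toMatrix (α : L) : phi b α = b.toMatrix (fun j => α * b j) := by
  ext i j
  simp [phi, LinearMap.toMatrix_apply, Module.Basis.toMatrix_apply]

theorem phi_mul_toMatrix (α : L) (v : Fin s → L) :
    phi b α * b.toMatrix v = b.toMatrix (fun j => α * v j) := by
  ext i j
  simpa [phi, mul_apply, mulVec, dotProduct, Module.Basis.toMatrix_apply, mul_comm] using
    congrFun (LinearMap.toMatrix_mulVec_repr b b (LinearMap.mulLeft K α) (v j)) i

theorem phi_ringEquiv {ρ : L ≃+* L} {σ : K ≃+* K}
    (hσ : ∀ c, algebraMap K L (σ c) = ρ (algebraMap K L c)) (α : L) :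
    phi b (ρ α) = b.toMatrix (ρ ∘ b) * (phi b α).map σ * (b.toMatrix (ρ ∘ b))⁻¹ := by
  have hcomm : phi b (ρ α) * b.toMatrix (ρ ∘ b) = b.toMatrix (ρ ∘ b) * (phi b α).map σ := by
    rw [phi_mul_toMatrix, phi_eq_toMatrix, b.toMatrix_ringEquiv_comp_mul hσ]
    simp only [Function.comp_def, map_mul]
  rw [← hcomm, mul_nonsing_inv_cancel_right _ _ (b.isUnit_det_toMatrix_ringEquiv_comp hσ)]

variable {n : ℕ}

noncomputable def phibarRingHom :
    Matrix (Fin n) (Fin n) L →+* Matrix (Fin n × Fin s) (Fin n × Fin s) K :=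
  (compRingEquiv (Fin n) (Fin s) K).toRingHom.comp (Algebra.leftMulMatrix b).toRingHom.mapMatrix

theorem phibarRingHom_apply (A : Matrix (Fin n) (Fin n) L) : phibarRingHom b A = phibar b A :=
  rfl

theorem exists_phibar_map_ringEquiv {ρ : L ≃+* L} {σ : K ≃+* K}
    (hσ : ∀ c, algebraMap K L (σ c) = ρ (algebraMap K L c)) :
    ∃ D : Matrix (Fin n × Fin s) (Fin n × Fin s) K, IsUnit D.det ∧
      ∀ A : Matrix (Fin n) (Fin n) L, phibar b (A.map ρ) = D * (phibar b A).map σ * D⁻¹ := by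
  set P := b.toMatrix (ρ ∘ b)
  have hP : IsUnit P.det := b.isUnit_det_toMatrix_ringEquiv_comp hσ
  let e := compRingEquiv (Fin n) (Fin s) K
  have hinv : e (diagonal fun _ => P) * e (diagonal fun _ => P⁻¹) = 1 := by
    rw [← map_mul, diagonal_mul_diagonal, mul_nonsing_inv _ hP, diagonal_one, map_one]
  refine ⟨e (diagonal fun _ => P), isUnit_det_of_right_inverse hinv, fun A => ?_⟩
  have hblocks : (A.map ρ).map (phi b) =
      diagonal (fun _ => P) * A.map (fun a => (phi b a).map σ) * diagonal (fun _ => P⁻¹) := by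
    ext1 i j
    rw [mul_diagonal, diagonal_mul]
    exact phi_ringEquiv b hσ (A i j)
  calc phibar b (A.map ρ) = e ((A.map ρ).map (phi b)) := rfl
    _ = e (diagonal fun _ => P) * (phibar b A).map σ * e (diagonal fun _ => P⁻¹) := by
      rw [hblocks, map_mul, map_mul]
      rfl
    _ = _ := by rw [inv_eq_right_inv hinv]

end RegularRepresentation

section EmbeddedSpace

variable {K L M : Type*} [Field K] [Field L] [Field M] [Algebra K L] [Algebra K M] {s n : ℕ}
  (b : Module.Basis (Fin s) K L)

theorem embSpace_eq_map_of_coe_eq_image {C C' : Submodule K (Matrix (Fin n) (Fin n) L)}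
    {f : Matrix (Fin n) (Fin n) L → Matrix (Fin n) (Fin n) L}
    (hC : (C' : Set (Matrix (Fin n) (Fin n) L)) = f '' C) {τ : M →+* M} [RingHomSurjective τ]
    (Ψ : Matrix (Fin n × Fin s) (Fin n × Fin s) M →ₛₗ[τ] Matrix (Fin n × Fin s) (Fin n × Fin s) M)
    (hf : ∀ A, (phibar b (f A)).map (algebraMap K M) = Ψ ((phibar b A).map (algebraMap K M))) :
    embSpace b C' = (embSpace b C).map Ψ := by
  rw [embSpace, embSpace, Submodule.map_span, hC, ← Set.image_comp, ← Set.image_comp]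
  exact congrArg _ (Set.image_congr fun A _ => hf A)

theorem exists_embSpace_eq_map_mulMapMul [Finite K] [Finite M]
    {C C' : Submodule K (Matrix (Fin n) (Fin n) L)} {X Y : Matrix (Fin n) (Fin n) L}
    {ρ : L ≃+* L} (hX : IsUnit X) (hY : IsUnit Y)
    (hC : (C' : Set (Matrix (Fin n) (Fin n) L)) =
      (fun A : Matrix (Fin n) (Fin n) L => X * A.map ρ * Y) '' C) :
    ∃ (τ : M ≃+* M) (U V : Matrix (Fin n × Fin s) (Fin n × Fin s) M),
      IsUnit U.det ∧ IsUnit V.det ∧ embSpace b C' = (embSpace b C).map (mulMapMul τ U V) := by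
  obtain ⟨σ, hσ⟩ := exists_ringEquiv_restrict (K := K) ρ
  obtain ⟨τ, hτ⟩ := exists_ringEquiv_lift (L := M) σ
  obtain ⟨D, hD, hphibar⟩ := exists_phibar_map_ringEquiv b (n := n) hσ
  let incl := (algebraMap K M).mapMatrix (m := Fin n × Fin s)
  have hunit : ∀ {Z}, IsUnit Z → IsUnit (incl Z).det := fun hZ =>
    (isUnit_iff_isUnit_det _).mp (hZ.map incl)
  have hXD := (hX.map (phibarRingHom b)).mul ((isUnit_iff_isUnit_det D).mpr hD)
  have hDY := ((isUnit_iff_isUnit_det D⁻¹).mpr (isUnit_nonsing_inv_det D hD)).mul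
    (hY.map (phibarRingHom b))
  refine ⟨τ, incl (phibar b X * D), incl (D⁻¹ * phibar b Y), hunit hXD, hunit hDY,
    embSpace_eq_map_of_coe_eq_image b hC _ fun A => ?_⟩
  have hστ : ((phibar b A).map σ).map (algebraMap K M) =
      ((phibar b A).map (algebraMap K M)).map τ := by
    simp only [Matrix.map_map]
    exact congrArg _ (funext fun c => (hτ c).symm)
  have hsplit : phibar b (X * A.map ρ * Y) =
      phibar b X * D * (phibar b A).map σ * (D⁻¹ * phibar b Y) := by
    rw [← phibarRingHom_apply, map_mul, map_mul, phibarRingHom_apply, phibarRingHom_apply,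
      phibarRingHom_apply, hphibar]
    simp only [Matrix.mul_assoc]
  rw [← RingHom.mapMatrix_apply, hsplit, map_mul, map_mul,
    RingHom.mapMatrix_apply _ ((phibar b A).map σ), hστ]
  rfl

end EmbeddedSpace

theorem inequiv_of_embSpace_rank_ne_general (s n : ℕ) (K L M : Type*) [Field K] [Fintype K] [Field L]
    [Field M] [Fintype M] [Algebra K L] [Algebra K M]
    (b : Module.Basis (Fin s) K L)
    (C C' : Submodule K (Matrix (Fin n) (Fin n) L))
    (hne : ∃ r : ℕ,
        {N ∈ (embSpace (M := M) b C : Set (Matrix (Fin n × Fin s) (Fin n × Fin s) M)) |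
            N.rank = r}.ncard ≠
        {N ∈ (embSpace (M := M) b C' : Set (Matrix (Fin n × Fin s) (Fin n × Fin s) M)) |
            N.rank = r}.ncard) :
    ¬ ∃ (X Y : Matrix (Fin n) (Fin n) L) (ρ : L ≃+* L), IsUnit X ∧ IsUnit Y ∧
        (C' : Set (Matrix (Fin n) (Fin n) L)) =
          (fun A => X * A.map ρ * Y) '' (C : Set (Matrix (Fin n) (Fin n) L)) := by
  rintro ⟨X, Y, ρ, hX, hY, hC⟩
  obtain ⟨r, hr⟩ := hne
  obtain ⟨τ, U, V, hU, hV, hemb⟩ := exists_embSpace_eq_map_mulMapMul (M := M) b hX hY hC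
  rw [hemb, Submodule.map_coe] at hr
  exact hr (ncard_setOf_rank_image_mulMapMul hU hV _ r).symm

/-- If for some `m ≥ 1` the rank distributions of `E_m(C)` and
`E_m(C')` differ, then there are no invertible `X, Y ∈ Mₙ(F_{q^s})` and field
automorphism `ρ` of `F_{q^s}` with `C' = { X A^ρ Y : A ∈ C }`; that is, `C` and `C'`
are inequivalent as matrix rank-metric codes. -/
theorem inequiv_of_embSpace_rank_ne (q s n m : ℕ) (hq : IsPrimePow q) (hs : 1 ≤ s)
    (hn : 1 ≤ n) (hm : 1 ≤ m) (K L M : Type*) [Field K] [Fintype K] [Field L] [Fintype L]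
    [Field M] [Fintype M] [Algebra K L] [Algebra K M] (hKcard : Fintype.card K = q)
    (hLcard : Fintype.card L = q ^ s) (hMcard : Fintype.card M = q ^ m)
    (b : Module.Basis (Fin s) K L)
    (C C' : Submodule K (Matrix (Fin n) (Fin n) L))
    (hne : ∃ r : ℕ,
        {N ∈ (embSpace (M := M) b C : Set (Matrix (Fin n × Fin s) (Fin n × Fin s) M)) |
            N.rank = r}.ncard ≠
        {N ∈ (embSpace (M := M) b C' : Set (Matrix (Fin n × Fin s) (Fin n × Fin s) M)) |
            N.rank = r}.ncard) :
    ¬ ∃ (X Y : Matrix (Fin n) (Fin n) L) (ρ : L ≃+* L), IsUnit X ∧ IsUnit Y ∧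
        (C' : Set (Matrix (Fin n) (Fin n) L)) =
          (fun A => X * A.map ρ * Y) '' (C : Set (Matrix (Fin n) (Fin n) L)) :=
  inequiv_of_embSpace_rank_ne_general s n K L M b C C' hne
end

section
/- There exists an invertible matrix W ∈ M_{ns}(F_{q^s}) such that for every A ∈ M_n(F_{q^s}), W · φ̄(A) = ψ(A) · W, where φ̄(A) is viewed in M_{ns}(F_{q^s}) via the inclusion F_q ⊆ F_{q^s}. That is, a single invertible matrix simultaneously conjugates the block regular representation φ̄(A) of every matrix A to the block-diagonal matrix ψ(A) = A ⊕ A^σ ⊕ ⋯ ⊕ A^{σ^{s−1}}. -/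
/-- `ψ : Mₙ(F_{q^s}) → M_{ns}(F_{q^s})`, `ψ(A) = A ⊕ A^σ ⊕ ⋯ ⊕ A^{σ^{s−1}}`, the
block-diagonal matrix of the entrywise Frobenius twists of `A` (here `q` is passed
explicitly and `σ^j` is `x ↦ x^{q^j}` entrywise). -/
def psi {L : Type*} [Field L] (q s n : ℕ) (A : Matrix (Fin n) (Fin n) L) :
    Matrix (Fin n × Fin s) (Fin n × Fin s) L :=
  Matrix.blockDiagonal fun u : Fin s => A.map fun x => x ^ q ^ (u : ℕ)

/-! With `σ` the Frobenius of `L/K`, take `W = 1 ⊗ M` for the Moore matrix `M = (σ^u (b v))_{u,v}`.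
Since `σ^u` is `K`-linear and `φ(α)` is the matrix of multiplication by `α`, one has
`M φ(α) = diag(σ^u α) M`; and `M` is invertible because the `s` powers `σ^u` are distinct
characters, hence linearly independent by Dedekind. -/

open Matrix
open scoped Kronecker

section Moore

variable {K L L' ι : Type*} [Field K] [Field L] [Field L'] [Algebra K L] [Algebra K L']

/-- For `τ u = σ^u` this is the Moore matrix `(b_v ^ {q^u})`. -/
def mooreMatrix (τ : ι → L →ₐ[K] L') (b : ι → L) : Matrix ι ι L' :=
  Matrix.of fun u v => τ u (b v)

@[simp]
theorem mooreMatrix_apply (τ : ι → L →ₐ[K] L') (b : ι → L) (u v : ι) :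
    mooreMatrix τ b u v = τ u (b v) :=
  rfl

theorem det_mooreMatrix_ne_zero [Fintype ι] [DecidableEq ι] {τ : ι → L →ₐ[K] L'}
    (hτ : Function.Injective τ) (b : Module.Basis ι K L) : (mooreMatrix τ b).det ≠ 0 := by
  intro hdet
  obtain ⟨c, hc, hcM⟩ := exists_vecMul_eq_zero_iff.mpr hdet
  have hcomb : ∑ u, c u • (τ u).toLinearMap = 0 :=
    b.ext fun v => by simpa [vecMul, dotProduct] using congrFun hcM v
  have hindep : LinearIndependent L' fun u => ⇑(τ u : L →* L') :=
    (linearIndependent_monoidHom L L').comp _ fun u w h => hτ (AlgHom.ext (DFunLike.congr_fun h :))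
  refine hc (funext <| Fintype.linearIndependent_iff.mp hindep c <| funext fun x => ?_)
  simpa using LinearMap.congr_fun hcomb x

theorem sum_algHom_basis_mul_phi {s : ℕ} (τ : L →ₐ[K] L') (b : Module.Basis (Fin s) K L)
    (α : L) (v : Fin s) :
    ∑ w, τ (b w) * algebraMap K L' (phi b α w v) = τ α * τ (b v) := by
  have hrepr : ∑ w, phi b α w v • b w = α * b v := by
    simp only [phi, LinearMap.toMatrix_apply]
    exact b.sum_repr (α * b v)
  calc ∑ w, τ (b w) * algebraMap K L' (phi b α w v)
      = τ (∑ w, phi b α w v • b w) := by simp [map_sum, Algebra.smul_def, mul_comm]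
    _ = τ α * τ (b v) := by rw [hrepr, map_mul]

theorem one_kronecker_mooreMatrix_mul_phibar_map {s n : ℕ} (τ : Fin s → L →ₐ[K] L')
    (b : Module.Basis (Fin s) K L) (A : Matrix (Fin n) (Fin n) L) :
    (1 ⊗ₖ mooreMatrix τ b) * (phibar b A).map (algebraMap K L') =
      blockDiagonal (fun u => A.map (τ u)) * (1 ⊗ₖ mooreMatrix τ b) := by
  ext ⟨i, u⟩ ⟨j, v⟩
  simp [mul_apply, Fintype.sum_prod_type, one_apply, blockDiagonal_apply, phibar,
    sum_algHom_basis_mul_phi]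

end Moore

theorem injective_frobeniusAlgEquivOfAlgebraic_pow_fin {K L : Type*} [Field K] [Fintype K]
    [Field L] [Algebra K L] [Finite L] {s : ℕ} (b : Module.Basis (Fin s) K L) :
    Function.Injective fun u : Fin s => FiniteField.frobeniusAlgEquivOfAlgebraic K L ^ (u : ℕ) := by
  have horder : orderOf (FiniteField.frobeniusAlgEquivOfAlgebraic K L) = s := by
    rw [FiniteField.orderOf_frobeniusAlgEquivOfAlgebraic, Module.finrank_eq_card_basis b,
      Fintype.card_fin]
  exact fun u w h => Fin.ext <| pow_injOn_Iio_orderOf (horder ▸ u.isLt) (horder ▸ w.isLt) h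

theorem exists_simultaneous_conjugation_to_psi_general (q s n : ℕ) (K L : Type*) [Field K] [Fintype K]
    [Field L] [Algebra K L] (hKcard : Fintype.card K = q) (b : Module.Basis (Fin s) K L) :
    ∃ W : Matrix (Fin n × Fin s) (Fin n × Fin s) L, IsUnit W ∧
      ∀ A : Matrix (Fin n) (Fin n) L,
        W * (phibar b A).map (algebraMap K L) = psi q s n A * W := by
  subst hKcard
  have : Module.Finite K L := .of_basis b
  have : Finite L := Module.finite_of_finite K
  let τ : Fin s → L →ₐ[K] L :=
    fun u => (FiniteField.frobeniusAlgEquivOfAlgebraic K L ^ (u : ℕ)).toAlgHom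
  have hτ : Function.Injective τ :=
    AlgEquiv.coe_toAlgHom_injective.comp (injective_frobeniusAlgEquivOfAlgebraic_pow_fin b)
  have hpsi (A : Matrix (Fin n) (Fin n) L) :
      psi (Fintype.card K) s n A = blockDiagonal fun u => A.map (τ u) := by
    simp [psi, τ, AlgEquiv.coe_pow, FiniteField.coe_frobeniusAlgEquivOfAlgebraic_iterate]
  refine ⟨1 ⊗ₖ mooreMatrix τ b, ?_, fun A => ?_⟩
  · rw [isUnit_iff_isUnit_det, det_kronecker, det_one, one_pow, one_mul]
    exact (isUnit_iff_ne_zero.mpr (det_mooreMatrix_ne_zero hτ b)).pow _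
  · rw [hpsi, one_kronecker_mooreMatrix_mul_phibar_map]

/-- There is a single invertible matrix `W ∈ M_{ns}(F_{q^s})`
that simultaneously conjugates the block regular representation `φ̄(A)` of every
`A ∈ Mₙ(F_{q^s})` to the block-diagonal matrix `ψ(A) = A ⊕ A^σ ⊕ ⋯ ⊕ A^{σ^{s−1}}`:
`W · φ̄(A) = ψ(A) · W` for all `A`, where `φ̄(A)` is viewed in `M_{ns}(F_{q^s})`
via `F_q ⊆ F_{q^s}`. -/
theorem exists_simultaneous_conjugation_to_psi (q s n : ℕ) (hq : IsPrimePow q)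
    (hs : 1 ≤ s) (hn : 1 ≤ n) (K L : Type*) [Field K] [Fintype K] [Field L] [Fintype L]
    [Algebra K L] (hKcard : Fintype.card K = q) (hLcard : Fintype.card L = q ^ s)
    (b : Module.Basis (Fin s) K L) :
    ∃ W : Matrix (Fin n × Fin s) (Fin n × Fin s) L, IsUnit W ∧
      ∀ A : Matrix (Fin n) (Fin n) L,
        W * (phibar b A).map (algebraMap K L) = psi q s n A * W :=
  exists_simultaneous_conjugation_to_psi_general q s n K L hKcard b
end

section
/- For every A ∈ M_n(F_{q^s}), the rank of φ̄(A) as a matrix over F_q equals s times the rank of A as a matrix over F_{q^s}, and equals the rank of ψ(A) = A ⊕ A^σ ⊕ ⋯ ⊕ A^{σ^{s−1}} as a matrix over F_{q^s}. Consequently, for any F_q-subspace C of M_n(F_{q^s}), the multiset { s·rank(x) : x ∈ C } equals the multiset { rank(φ̄(x)) : x ∈ C } and equals the multiset { rank(ψ(x)) : x ∈ C }. -/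
/-!
`φ̄(A)` is the matrix, in the `F_q`-basis `(v_k e_i)` of `F_{q^s}^n`, of `x ↦ A x` regarded as an
`F_q`-linear map; its image is the image of `A` with scalars restricted to `F_q`, whose
`F_q`-dimension is `s` times its `F_{q^s}`-dimension. `ψ(A)` is block diagonal, so its rank is the
sum of the ranks of the blocks `A^{σ^u}`, and applying a field homomorphism entrywise preserves
rank, because it carries a normal form `V A U = diag(1, …, 1, 0, …, 0)` with `V`, `U` invertible
to one of the same shape. The statement about a subspace `C` then holds pointwise.
-/

open Module

theorem Submodule.finrank_pi_univ {K ι : Type*} [DivisionRing K] [Fintype ι] {φ : ι → Type*}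
    [∀ i, AddCommGroup (φ i)] [∀ i, Module K (φ i)] [∀ i, FiniteDimensional K (φ i)]
    (p : ∀ i, Submodule K (φ i)) :
    finrank K (Submodule.pi Set.univ p) = ∑ i, finrank K (p i) := by
  let e : Submodule.pi Set.univ p ≃ₗ[K] ∀ i, p i :=
    { Equiv.Set.univPi fun i => (p i : Set (φ i)) with
      map_add' := fun _ _ => rfl
      map_smul' := fun _ _ => rfl }
  rw [e.finrank_eq, finrank_pi_fintype]

theorem Submodule.finrank_restrictScalars {K L M : Type*} [Field K] [Field L] [Algebra K L]
    [AddCommGroup M] [Module K M] [Module L M] [IsScalarTower K L M] (p : Submodule L M) :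
    finrank K (p.restrictScalars K) = finrank K L * finrank L p := by
  rw [Module.finrank_mul_finrank]
  exact ((Submodule.restrictScalarsEquiv K L M p).restrictScalars K).finrank_eq

namespace Matrix

section RankMap

variable {m : Type*} [Fintype m]

theorem rank_fromBlocks_one_zero_submatrix {R : Type*} [Field R] {r k : ℕ}
    (e : m ≃ Fin r ⊕ Fin k) :
    ((fromBlocks (1 : Matrix (Fin r) (Fin r) R) 0 0 0).submatrix e e).rank = r := by
  classical
  rw [rank_submatrix, ← diagonal_one, ← diagonal_zero, fromBlocks_diagonal, rank_diagonal]
  simp [Fintype.card_subtype, Finset.card_filter, Fintype.sum_sum_type]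

theorem rank_map_ringHom [DecidableEq m] {K K' : Type*} [Field K] [Field K'] (f : K →+* K')
    (A : Matrix m m K) :
    (A.map f).rank = A.rank := by
  obtain ⟨V, U, e, hV, hU, hN⟩ := A.exists_rank_normal_form
  have hN' : V.map f * A.map f * U.map f = (fromBlocks 1 0 0 0).submatrix e e := by
    rw [← Matrix.map_mul, ← Matrix.map_mul, hN, ← submatrix_map, fromBlocks_map]
    simp
  have hV' : IsUnit (V.map f).det := (isUnit_iff_isUnit_det _).mp (hV.map f.mapMatrix)
  have hU' : IsUnit (U.map f).det := (isUnit_iff_isUnit_det _).mp (hU.map f.mapMatrix)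
  rw [← rank_mul_eq_left_of_isUnit_det _ _ hU', ← rank_mul_eq_right_of_isUnit_det _ _ hV',
    ← mul_assoc, hN', rank_fromBlocks_one_zero_submatrix]

end RankMap

section BlockDiagonal

variable {m n ι : Type*} [Fintype n] [Fintype ι] [DecidableEq ι]

theorem blockDiagonal_mulVec {R : Type*} [Semiring R] (M : ι → Matrix m n R) (v : n × ι → R)
    (i : m) (u : ι) : (blockDiagonal M *ᵥ v) (i, u) = (M u *ᵥ fun j => v (j, u)) i := by
  simp only [mulVec, dotProduct, Fintype.sum_prod_type, blockDiagonal_apply, ite_mul, zero_mul]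
  simp

theorem rank_blockDiagonal {K : Type*} [Field K] [Fintype m] (M : ι → Matrix m n K) :
    (blockDiagonal M).rank = ∑ u, (M u).rank := by
  let E : (m × ι → K) ≃ₗ[K] (ι → m → K) :=
    (LinearEquiv.funCongrLeft K K (Equiv.prodComm ι m)).trans (LinearEquiv.curry K K ι m)
  have hrange : (LinearMap.range (blockDiagonal M).mulVecLin).map E.toLinearMap =
      Submodule.pi Set.univ fun u => LinearMap.range (M u).mulVecLin := by
    ext w
    simp only [Submodule.mem_map, LinearMap.mem_range, Submodule.mem_pi, Set.mem_univ,
      forall_const, exists_exists_eq_and]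
    constructor
    · rintro ⟨v, rfl⟩ u
      exact ⟨fun j => v (j, u), funext fun i => (blockDiagonal_mulVec M v i u).symm⟩
    · intro h
      choose v hv using h
      refine ⟨fun p => v p.2 p.1, funext fun u => funext fun i => ?_⟩
      simp [E, blockDiagonal_mulVec, ← hv u]
  rw [rank, ← E.finrank_map_eq, hrange, Submodule.finrank_pi_univ]
  rfl

end BlockDiagonal

theorem rank_comp_map_leftMulMatrix {K L m ι : Type*} [Field K] [Field L] [Algebra K L]
    [Fintype m] [DecidableEq m] [Fintype ι] [DecidableEq ι] (b : Basis ι K L) (A : Matrix m m L) :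
    (comp m m ι ι K (A.map (Algebra.leftMulMatrix b))).rank = Fintype.card ι * A.rank := by
  have h := A.mulVecLin.restrictScalars_toMatrix b (Pi.basisFun L m)
  rw [LinearMap.toMatrix_eq_toMatrix', ← toLin'_apply', LinearMap.toMatrix'_toLin'] at h
  rw [← h, rank_eq_finrank_range_toLin _ (b.smulTower' (Pi.basisFun L m))
      (b.smulTower' (Pi.basisFun L m)), toLin_toMatrix, LinearMap.range_restrictScalars,
    Submodule.finrank_restrictScalars, finrank_eq_card_basis b]
  rfl

end Matrix

theorem phibar_eq_comp {K L : Type*} [Field K] [Field L] [Algebra K L] {s n : ℕ}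
    (b : Basis (Fin s) K L) (A : Matrix (Fin n) (Fin n) L) :
    phibar b A = Matrix.comp _ _ _ _ K (A.map (Algebra.leftMulMatrix b)) :=
  rfl

theorem rank_phibar {K L : Type*} [Field K] [Field L] [Algebra K L] {s n : ℕ}
    (b : Basis (Fin s) K L) (A : Matrix (Fin n) (Fin n) L) :
    (phibar b A).rank = s * A.rank := by
  rw [phibar_eq_comp, Matrix.rank_comp_map_leftMulMatrix, Fintype.card_fin]

theorem rank_psi {K L : Type*} [Field K] [Fintype K] [Field L] [Algebra K L]
    [Algebra.IsAlgebraic K L] (s n : ℕ) (A : Matrix (Fin n) (Fin n) L) :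
    (psi (Fintype.card K) s n A).rank = s * A.rank := by
  have hfrob (u : ℕ) : (fun x : L => x ^ Fintype.card K ^ u) =
      ((FiniteField.frobeniusAlgEquivOfAlgebraic K L ^ u : L ≃ₐ[K] L) : L →+* L) := by
    rw [RingHom.coe_coe, AlgEquiv.coe_pow,
      FiniteField.coe_frobeniusAlgEquivOfAlgebraic_iterate]
  simp_rw [psi, Matrix.rank_blockDiagonal, hfrob, Matrix.rank_map_ringHom]
  simp

theorem rank_phibar_eq_s_mul_rank_general (q s n : ℕ) (K L : Type*) [Field K] [Fintype K] [Field L]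
    [Algebra K L] (hKcard : Fintype.card K = q)
    (b : Module.Basis (Fin s) K L) :
    (∀ A : Matrix (Fin n) (Fin n) L,
        (phibar b A).rank = s * A.rank ∧ (psi q s n A).rank = s * A.rank) ∧
      ∀ (C : Submodule K (Matrix (Fin n) (Fin n) L)) (r : ℕ),
        {x ∈ (C : Set (Matrix (Fin n) (Fin n) L)) | s * x.rank = r}.ncard =
            {x ∈ (C : Set (Matrix (Fin n) (Fin n) L)) | (phibar b x).rank = r}.ncard ∧
          {x ∈ (C : Set (Matrix (Fin n) (Fin n) L)) | s * x.rank = r}.ncard =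
            {x ∈ (C : Set (Matrix (Fin n) (Fin n) L)) | (psi q s n x).rank = r}.ncard := by
  subst hKcard
  have : Module.Finite K L := .of_basis b
  have hrank (A : Matrix (Fin n) (Fin n) L) :
      (phibar b A).rank = s * A.rank ∧ (psi (Fintype.card K) s n A).rank = s * A.rank :=
    ⟨rank_phibar b A, rank_psi s n A⟩
  refine ⟨hrank, fun C r => ⟨?_, ?_⟩⟩ <;> simp only [(hrank _).1, (hrank _).2]

/-- For every `A ∈ Mₙ(F_{q^s})` the rank of `φ̄(A)` over `F_q`
equals `s` times the rank of `A` over `F_{q^s}`, and equals the rank of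
`ψ(A) = A ⊕ A^σ ⊕ ⋯ ⊕ A^{σ^{s−1}}` over `F_{q^s}`.  Consequently, for any
`F_q`-subspace `C` of `Mₙ(F_{q^s})`, the multisets `{ s·rank(x) : x ∈ C }`,
`{ rank(φ̄(x)) : x ∈ C }` and `{ rank(ψ(x)) : x ∈ C }` coincide. -/
theorem rank_phibar_eq_s_mul_rank (q s n : ℕ) (hq : IsPrimePow q) (hs : 1 ≤ s)
    (hn : 1 ≤ n) (K L : Type*) [Field K] [Fintype K] [Field L] [Fintype L]
    [Algebra K L] (hKcard : Fintype.card K = q) (hLcard : Fintype.card L = q ^ s)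
    (b : Module.Basis (Fin s) K L) :
    (∀ A : Matrix (Fin n) (Fin n) L,
        (phibar b A).rank = s * A.rank ∧ (psi q s n A).rank = s * A.rank) ∧
      ∀ (C : Submodule K (Matrix (Fin n) (Fin n) L)) (r : ℕ),
        {x ∈ (C : Set (Matrix (Fin n) (Fin n) L)) | s * x.rank = r}.ncard =
            {x ∈ (C : Set (Matrix (Fin n) (Fin n) L)) | (phibar b x).rank = r}.ncard ∧
          {x ∈ (C : Set (Matrix (Fin n) (Fin n) L)) | s * x.rank = r}.ncard =
            {x ∈ (C : Set (Matrix (Fin n) (Fin n) L)) | (psi q s n x).rank = r}.ncard :=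
  rank_phibar_eq_s_mul_rank_general q s n K L hKcard b
end

section
/- Let L be a positive multiple of s and ι : F_{q^s} ↪ F_{q^L} the field embedding (applied entrywise to matrices, and composed with F_q ⊆ F_{q^s} for matrices over F_q). Then for all α_1, …, α_k ∈ F_{q^L} and all A_1, …, A_k ∈ M_n(F_{q^s}): rank( Σ_{i=1}^k α_i · ι(φ̄(A_i)) ) = Σ_{j=0}^{s−1} rank( Σ_{i=1}^k α_i · ι(A_i^{σ^j}) ), where all ranks are taken over F_{q^L}. -/
open Matrix Kronecker
open Module (finrank)

namespace Submodule

variable {ι R : Type*} {φ : ι → Type*} [Semiring R] [∀ i, AddCommMonoid (φ i)]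
  [∀ i, Module R (φ i)]

def piUnivEquivPi (p : ∀ i, Submodule R (φ i)) : pi Set.univ p ≃ₗ[R] ∀ i, p i where
  toFun x i := ⟨x.1 i, x.2 i trivial⟩
  invFun x := ⟨fun i => x i, fun i _ => (x i).2⟩
  map_add' _ _ := rfl
  map_smul' _ _ := rfl

end Submodule

namespace LinearMap

variable {ι R : Type*} {φ ψ : ι → Type*}

theorem range_piMap [Semiring R] [∀ i, AddCommMonoid (φ i)] [∀ i, AddCommMonoid (ψ i)]
    [∀ i, Module R (φ i)] [∀ i, Module R (ψ i)]
    (f : ∀ i, φ i →ₗ[R] ψ i) : range (piMap f) = Submodule.pi Set.univ fun i => range (f i) :=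
  SetLike.coe_injective <| by simp only [Submodule.coe_pi, coe_range, coe_piMap, Set.range_piMap]

theorem finrank_range_piMap [Fintype ι] [Field R] [∀ i, AddCommGroup (φ i)]
    [∀ i, AddCommGroup (ψ i)] [∀ i, Module R (φ i)] [∀ i, Module R (ψ i)]
    [∀ i, FiniteDimensional R (φ i)] (f : ∀ i, φ i →ₗ[R] ψ i) :
    finrank R (range (piMap f)) = ∑ i, finrank R (range (f i)) := by
  rw [range_piMap, (Submodule.piUnivEquivPi _).finrank_eq, Module.finrank_pi_fintype]

end LinearMap

theorem Matrix.rank_blockDiagonal_s12 {o m n K : Type*} [Fintype o] [DecidableEq o] [Fintype n]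
    [Field K] (S : o → Matrix m n K) :
    (blockDiagonal S).rank = ∑ k, (S k).rank := by
  let em : (m × o → K) ≃ₗ[K] (o → m → K) :=
    (LinearEquiv.funCongrLeft K K (Equiv.prodComm o m)).trans (LinearEquiv.curry K K o m)
  let en : (n × o → K) ≃ₗ[K] (o → n → K) :=
    (LinearEquiv.funCongrLeft K K (Equiv.prodComm o n)).trans (LinearEquiv.curry K K o n)
  have hconj : em.toLinearMap ∘ₗ (blockDiagonal S).mulVecLin =
      LinearMap.piMap (fun k => (S k).mulVecLin) ∘ₗ en.toLinearMap := by
    ext v k i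
    simp [em, en, mulVec, dotProduct, Fintype.sum_prod_type, blockDiagonal_apply]
  calc (blockDiagonal S).rank
      = finrank K (LinearMap.range (em.toLinearMap ∘ₗ (blockDiagonal S).mulVecLin)) := by
        rw [LinearMap.range_comp, LinearEquiv.finrank_map_eq]; rfl
    _ = finrank K (LinearMap.range (LinearMap.piMap fun k => (S k).mulVecLin)) := by
        rw [hconj, LinearMap.range_comp_of_range_eq_top _ (LinearEquiv.range _)]
    _ = ∑ k, (S k).rank := LinearMap.finrank_range_piMap _

section Embeddings

variable {K L E : Type*} [Field K] [Field L] [Field E] [Algebra K L] [Algebra K E] {s : ℕ}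
  (b : Module.Basis (Fin s) K L)

theorem vecMul_map_phi (ψ : L →ₐ[K] E) (β : L) :
    (fun t => ψ (b t)) ᵥ* (phi b β).map (algebraMap K E) = ψ β • fun t => ψ (b t) := by
  ext u
  have h := congrArg ψ (b.sum_repr (β * b u))
  simp only [map_sum, map_mul, Algebra.smul_def, AlgHom.commutes] at h
  simp only [vecMul, dotProduct, map_apply, phi, LinearMap.toMatrix_apply,
    LinearMap.mulLeft_apply, Pi.smul_apply, smul_eq_mul, ← h]
  exact Finset.sum_congr rfl fun t _ => mul_comm _ _

noncomputable def embeddingMatrix (ψ : Fin s → L →ₐ[K] E) : Matrix (Fin s) (Fin s) E :=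
  .of fun j t => ψ j (b t)

theorem isUnit_embeddingMatrix {ψ : Fin s → L →ₐ[K] E} (hψ : Function.Injective ψ) :
    IsUnit (embeddingMatrix b ψ) := by
  rw [← linearIndependent_rows_iff_isUnit]
  exact ((linearIndependent_toLinearMap K L E).comp ψ hψ).map' (b.constr E).symm.toLinearMap
    (LinearEquiv.ker _)

theorem kronecker_embeddingMatrix_mul_map_phibar {n : ℕ} (ψ : Fin s → L →ₐ[K] E)
    (A : Matrix (Fin n) (Fin n) L) :
    (1 ⊗ₖ embeddingMatrix b ψ) * (phibar b A).map (algebraMap K E) =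
      blockDiagonal (fun j => A.map (ψ j)) * (1 ⊗ₖ embeddingMatrix b ψ) := by
  ext ⟨a, j⟩ ⟨c, u⟩
  have h := congrFun (vecMul_map_phi b (ψ j) (A a c)) u
  simp only [vecMul, dotProduct, map_apply] at h
  simp [mul_apply, Fintype.sum_prod_type, one_apply, blockDiagonal_apply, phibar,
    embeddingMatrix, h]

theorem kronecker_embeddingMatrix_mul_sum_smul_map_phibar {ι : Type*} [Fintype ι] {n : ℕ}
    (ψ : Fin s → L →ₐ[K] E) (α : ι → E) (A : ι → Matrix (Fin n) (Fin n) L) :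
    (1 ⊗ₖ embeddingMatrix b ψ) * ∑ i, α i • (phibar b (A i)).map (algebraMap K E) =
      blockDiagonal (fun j => ∑ i, α i • (A i).map (ψ j)) * (1 ⊗ₖ embeddingMatrix b ψ) := by
  have hsum : blockDiagonal (fun j => ∑ i, α i • (A i).map (ψ j)) =
      ∑ i, α i • blockDiagonal fun j => (A i).map (ψ j) := by
    ext ⟨a, j⟩ ⟨c, u⟩
    simp only [blockDiagonal_apply, Matrix.sum_apply, Matrix.smul_apply]
    split_ifs <;> simp
  simp only [hsum, Finset.mul_sum, Finset.sum_mul, mul_smul_comm, smul_mul_assoc,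
    kronecker_embeddingMatrix_mul_map_phibar]

theorem rank_sum_smul_map_phibar {ι : Type*} [Fintype ι] {n : ℕ} {ψ : Fin s → L →ₐ[K] E}
    (hψ : Function.Injective ψ) (α : ι → E) (A : ι → Matrix (Fin n) (Fin n) L) :
    (∑ i, α i • (phibar b (A i)).map (algebraMap K E)).rank =
      ∑ j, (∑ i, α i • (A i).map (ψ j)).rank := by
  have hQ : IsUnit (1 ⊗ₖ embeddingMatrix b ψ : Matrix (Fin n × Fin s) _ E).det :=
    (isUnit_iff_isUnit_det _).mp (isUnit_one.kronecker (isUnit_embeddingMatrix b hψ))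
  rw [← rank_mul_eq_right_of_isUnit_det _ _ hQ,
    kronecker_embeddingMatrix_mul_sum_smul_map_phibar, rank_mul_eq_left_of_isUnit_det _ _ hQ,
    rank_blockDiagonal_s12]

end Embeddings

theorem FiniteField.injective_comp_frobeniusAlgHom_pow {K L E : Type*} [Field K] [Fintype K]
    [Field L] [Finite L] [Field E] [Algebra K L] [Algebra K E] {s : ℕ}
    (b : Module.Basis (Fin s) K L) (f : L →ₐ[K] E) :
    Function.Injective fun j : Fin s => f.comp (frobeniusAlgHom K L ^ (j : ℕ)) := by
  have hs : orderOf (frobeniusAlgHom K L) = s := by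
    rw [orderOf_frobeniusAlgHom, Module.finrank_eq_card_basis b, Fintype.card_fin]
  intro i j h
  exact Fin.ext <| pow_injOn_Iio_orderOf (hs ▸ i.isLt) (hs ▸ j.isLt)
    ((AlgHom.cancel_left f.injective).mp h)

theorem rank_phibar_sum_eq_sum_rank_frobenius_general (q s n k : ℕ)
    (K Ls E : Type*) [Field K] [Fintype K] [Field Ls] [Fintype Ls] [Field E]
    [Algebra K Ls] [Algebra Ls E] [Algebra K E] [IsScalarTower K Ls E]
    (hKcard : Fintype.card K = q)
    (b : Module.Basis (Fin s) K Ls) (α : Fin k → E) (A : Fin k → Matrix (Fin n) (Fin n) Ls) :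
    (∑ i, α i • (phibar b (A i)).map (algebraMap K E)).rank =
      ∑ j : Fin s,
        (∑ i, α i • ((A i).map fun x => x ^ q ^ (j : ℕ)).map (algebraMap Ls E)).rank := by
  rw [rank_sum_smul_map_phibar b (FiniteField.injective_comp_frobeniusAlgHom_pow b
    (IsScalarTower.toAlgHom K Ls E))]
  simp only [AlgHom.coe_comp, IsScalarTower.coe_toAlgHom', AlgHom.coe_pow,
    FiniteField.coe_frobeniusAlgHom, pow_iterate, hKcard, map_map]

/-- Let `L₀` be a positive multiple of `s` and
`ι : F_{q^s} ↪ F_{q^{L₀}}` the field embedding (here `E = F_{q^{L₀}}` is a common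
extension of `F_q ⊆ F_{q^s}`, which is exactly the condition `s ∣ L₀`).  Then for all
`α₁, …, α_k ∈ F_{q^{L₀}}` and `A₁, …, A_k ∈ Mₙ(F_{q^s})`,
`rank(Σᵢ αᵢ·ι(φ̄(Aᵢ))) = Σ_{j=0}^{s−1} rank(Σᵢ αᵢ·ι(Aᵢ^{σʲ}))`,
ranks taken over `F_{q^{L₀}}`. -/
theorem rank_phibar_sum_eq_sum_rank_frobenius (q s n k L₀ : ℕ) (hq : IsPrimePow q)
    (hs : 1 ≤ s) (hn : 1 ≤ n) (hk : 1 ≤ k) (hL₀ : 1 ≤ L₀) (hdvd : s ∣ L₀)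
    (K Ls E : Type*) [Field K] [Fintype K] [Field Ls] [Fintype Ls] [Field E] [Fintype E]
    [Algebra K Ls] [Algebra Ls E] [Algebra K E] [IsScalarTower K Ls E]
    (hKcard : Fintype.card K = q) (hLscard : Fintype.card Ls = q ^ s)
    (hEcard : Fintype.card E = q ^ L₀)
    (b : Module.Basis (Fin s) K Ls) (α : Fin k → E) (A : Fin k → Matrix (Fin n) (Fin n) Ls) :
    (∑ i, α i • (phibar b (A i)).map (algebraMap K E)).rank =
      ∑ j : Fin s,
        (∑ i, α i • ((A i).map fun x => x ^ q ^ (j : ℕ)).map (algebraMap Ls E)).rank :=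
  rank_phibar_sum_eq_sum_rank_frobenius_general q s n k K Ls E hKcard b α A
end

section
/- Let m be a positive divisor of s and let C be an F_q-subspace of M_n(F_{q^s}). Then every element of E_m(C), the F_{q^m}-span of { φ̄(A) : A ∈ C } inside M_{ns}(F_{q^m}), has rank divisible by s/m (rank taken over F_{q^m}). -/
/-!
Let `λ` generate `L = F_{q^s}` over `K = F_q`, with minimal polynomial `f` of degree `s`, and put
`D = φ̄(λ·1)`. As `λ·1` is central in `Mₙ(L)`, `D` commutes with every `N ∈ E_m(C)`, so the column
space of `N` is an `M[X]`-module (`X` acting by `D`) killed by `f`. By the structure theorem over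
the PID `M[X]` it is a sum of cyclic modules `M[X]/(p^e)` with `p` an irreducible factor of `f`
over `M = F_{q^m}`, of dimension `e · deg p`. Finally `s ∣ m · deg p`, because a root of `p`
generates an extension of `K` of degree `m · deg p` containing a root of `f`; so `s/m ∣ deg p`.
-/

open Polynomial Module

theorem Polynomial.dvd_finrank_of_mem_annihilator {F U : Type*} [Field F] [AddCommGroup U]
    [Module F[X] U] [Module F U] [IsScalarTower F F[X] U] [FiniteDimensional F U]
    {f : F[X]} (hf : f ≠ 0) (hfU : f ∈ annihilator F[X] U) {d : ℕ}
    (hd : ∀ p, p ∣ f → Irreducible p → d ∣ p.natDegree) :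
    d ∣ finrank F U := by
  have : Module.Finite F[X] U := .of_restrictScalars_finite F F[X] U
  have hU : IsTorsion F[X] U := fun x ↦
    ⟨⟨f, mem_nonZeroDivisors_of_ne_zero hf⟩, mem_annihilator.mp hfU x⟩
  obtain ⟨ι, _, p, hp, e, ⟨φ⟩⟩ := equiv_directSum_of_isTorsion hU
  have hpf : ∀ i, p i ^ e i ∣ f := by
    rw [φ.annihilator_eq] at hfU
    change f ∈ annihilator F[X] (Π₀ i, _) at hfU
    rw [annihilator_dfinsupp] at hfU
    intro i
    simpa [Ideal.annihilator_quotient, Ideal.mem_span_singleton] using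
      Submodule.mem_iInf _ |>.mp hfU i
  have : ∀ i, FiniteDimensional F (F[X] ⧸ F[X] ∙ p i ^ e i) := fun i ↦
    .of_basis (AdjoinRoot.powerBasis (pow_ne_zero _ (hp i).ne_zero)).basis
  rw [(φ.restrictScalars F).finrank_eq, finrank_directSum]
  refine Finset.dvd_sum fun i _ ↦ ?_
  rw [finrank_quotient_span_eq_natDegree, natDegree_pow]
  rcases Nat.eq_zero_or_pos (e i) with he | he
  · simp [he]
  · exact (hd _ ((dvd_pow_self _ he.ne').trans (hpf i)) (hp i)).mul_left _

theorem Module.End.range_mem_invtSubmodule_of_commute {R W : Type*} [CommRing R]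
    [AddCommGroup W] [Module R W] {g h : End R W} (hgh : Commute g h) : LinearMap.range h ∈ g.invtSubmodule := by
  rintro _ ⟨x, rfl⟩
  exact ⟨g x, congr($hgh.symm x)⟩

theorem Module.End.dvd_finrank_range_of_commute {F W : Type*} [Field F] [AddCommGroup W]
    [Module F W] [FiniteDimensional F W] {g h : End F W} (hgh : Commute g h) {f : F[X]}
    (hf : f ≠ 0) (hgf : aeval g f = 0) {d : ℕ}
    (hd : ∀ p, p ∣ f → Irreducible p → d ∣ p.natDegree) :
    d ∣ finrank F (LinearMap.range h) := by
  have hinv := range_mem_invtSubmodule_of_commute hgh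
  let e := AEval.equiv_mapSubmodule g (LinearMap.range h) hinv
  have := e.finiteDimensional
  rw [e.finrank_eq]
  refine dvd_finrank_of_mem_annihilator hf (mem_annihilator.mpr fun x ↦ ?_) hd
  ext1
  exact (AEval.of F W g).symm.injective (by simp [hgf])

theorem Polynomial.natDegree_dvd_finrank_mul_natDegree_of_dvd_map {K M : Type*} [Field K]
    [Field M] [Algebra K M] [FiniteDimensional K M] {f : K[X]} (hf : Irreducible f)
    {p : M[X]} (hp : Irreducible p) (hpf : p ∣ f.map (algebraMap K M)) :
    f.natDegree ∣ finrank K M * p.natDegree := by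
  have : Fact (Irreducible p) := ⟨hp⟩
  have : FiniteDimensional M (AdjoinRoot p) := (AdjoinRoot.powerBasis hp.ne_zero).finite
  have : FiniteDimensional K (AdjoinRoot p) := .trans K M (AdjoinRoot p)
  have hroot : aeval (AdjoinRoot.root p) f = 0 := by
    rw [← aeval_map_algebraMap M]
    obtain ⟨r, hr⟩ := hpf
    rw [hr, map_mul, AdjoinRoot.aeval_eq, AdjoinRoot.mk_self, zero_mul]
  have hdeg : f.natDegree = (minpoly K (AdjoinRoot.root p)).natDegree := by
    conv_lhs => rw [minpoly.Irreducible.eq_minpoly hf hroot]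
    exact natDegree_C_mul (leadingCoeff_ne_zero.mpr hf.ne_zero)
  have hp_deg : finrank M (AdjoinRoot p) = p.natDegree := finrank_quotient_span_eq_natDegree
  rw [hdeg, ← hp_deg, finrank_mul_finrank]
  exact minpoly.degree_dvd (.of_finite K _)

section phibar

variable {K L M : Type*} [Field K] [Field L] [Field M] [Algebra K L] [Algebra K M] {s n : ℕ}
  (b : Basis (Fin s) K L)

noncomputable def phibarAlgHom :
    Matrix (Fin n) (Fin n) L →ₐ[K] Matrix (Fin n × Fin s) (Fin n × Fin s) M :=
  (Algebra.ofId K M).mapMatrix.comp <| (Matrix.compAlgEquiv (Fin n) (Fin s) K K).toAlgHom.comp <|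
    ((LinearMap.toMatrixAlgEquiv b).toAlgHom.comp (Algebra.lmul K L)).mapMatrix

theorem embSpace_eq_span_image_phibarAlgHom (C : Submodule K (Matrix (Fin n) (Fin n) L)) :
    embSpace b C = Submodule.span M (phibarAlgHom b '' C) :=
  rfl

theorem commute_phibarAlgHom_algebraMap_of_mem_embSpace (x : L)
    {C : Submodule K (Matrix (Fin n) (Fin n) L)} {N : Matrix (Fin n × Fin s) (Fin n × Fin s) M}
    (hN : N ∈ embSpace b C) :
    Commute (phibarAlgHom b (algebraMap L _ x)) N := by
  suffices embSpace b C ≤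
      (Subalgebra.centralizer M {phibarAlgHom b (algebraMap L _ x)}).toSubmodule from
    (Subalgebra.mem_centralizer_iff M).mp (this hN) _ rfl
  rw [embSpace_eq_span_image_phibarAlgHom, Submodule.span_le, Set.image_subset_iff]
  rintro A - _ rfl
  rw [← map_mul, ← map_mul, Algebra.commutes]

end phibar

theorem rank_embSpace_dvd_general (q s n m : ℕ) (hdvd : m ∣ s) (K L M : Type*) [Field K] [Fintype K]
    [Field L] [Field M] [Fintype M] [Algebra K L] [Algebra K M] (hKcard : Fintype.card K = q)
    (hMcard : Fintype.card M = q ^ m) (b : Module.Basis (Fin s) K L)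
    (C : Submodule K (Matrix (Fin n) (Fin n) L)) :
    ∀ N ∈ embSpace (M := M) b C, (s / m) ∣ N.rank := by
  intro N hN
  subst hKcard
  obtain rfl : m = finrank K M :=
    Nat.pow_right_injective Fintype.one_lt_card (hMcard.symm.trans card_eq_pow_finrank)
  have : FiniteDimensional K L := .of_basis b
  let pb := Field.powerBasisOfFiniteOfSeparable K L
  set f := (minpoly K pb.gen).map (algebraMap K M)
  set D := phibarAlgHom (M := M) (n := n) b (algebraMap L _ pb.gen)
  have hDf : aeval D f = 0 := by
    rw [aeval_map_algebraMap, aeval_algHom_apply, aeval_algebraMap_apply, minpoly.aeval,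
      map_zero, map_zero]
  refine Module.End.dvd_finrank_range_of_commute
    ((commute_phibarAlgHom_algebraMap_of_mem_embSpace b pb.gen hN).map Matrix.toLinAlgEquiv')
    (map_ne_zero (minpoly.ne_zero pb.isIntegral_gen)) (by rw [aeval_algHom_apply, hDf, map_zero])
    fun p hpf hp ↦ ?_
  have := natDegree_dvd_finrank_mul_natDegree_of_dvd_map
    (minpoly.irreducible pb.isIntegral_gen) hp hpf
  rw [pb.natDegree_minpoly, ← pb.finrank, finrank_eq_card_basis b, Fintype.card_fin] at this
  exact (Nat.div_dvd_iff_dvd_mul hdvd finrank_pos).mpr this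

/-- Let `m` be a positive divisor of `s` and `C` an `F_q`-subspace
of `Mₙ(F_{q^s})`.  Then every element of `E_m(C)`, the `F_{q^m}`-span of
`{ φ̄(A) : A ∈ C }` inside `M_{ns}(F_{q^m})`, has rank divisible by `s/m`
(rank over `F_{q^m}`). -/
theorem rank_embSpace_dvd (q s n m : ℕ) (hq : IsPrimePow q) (hs : 1 ≤ s) (hn : 1 ≤ n)
    (hm : 1 ≤ m) (hdvd : m ∣ s) (K L M : Type*) [Field K] [Fintype K] [Field L]
    [Fintype L] [Field M] [Fintype M] [Algebra K L] [Algebra K M]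
    (hKcard : Fintype.card K = q) (hLcard : Fintype.card L = q ^ s)
    (hMcard : Fintype.card M = q ^ m) (b : Module.Basis (Fin s) K L)
    (C : Submodule K (Matrix (Fin n) (Fin n) L)) :
    ∀ N ∈ embSpace (M := M) b C, (s / m) ∣ N.rank :=
  rank_embSpace_dvd_general q s n m hdvd K L M hKcard hMcard b C
end
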